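/- Let G be a connected graph, S a minimal trivially perfect completion of G, H = G+S, and let L = (B, D) be a block of the universal clique decomposition of H. Let D_1, …, D_ℓ be the connected components of H[D] − B. If ℓ > 1, then in the original graph G every vertex v ∈ B has at least one neighbor in each of the sets D_1, …, D_ℓ; consequently, for every i ∈ {1, …, ℓ}, B ⊆ N_G(D \ (B ∪ D_i)). -/

import Mathlib

open SimpleGraph

universe u

/-- A graph is *trivially perfect* if it has no induced subgraph isomorphic to `C₄` or `P₄`. -/
def TriviallyPerfect {V : Type u} (G : SimpleGraph V) : Prop :=
  IsEmpty (SimpleGraph.cycleGraph 4 ↪g G) ∧ IsEmpty (SimpleGraph.pathGraph 4 ↪g G)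

/-- A *universal clique decomposition* of a graph `G`: a finite rooted tree (modelled as a
finite partial order in which the set of elements above any element is a chain and which has
a top element, the root) together with a partition of the vertices into nonempty bags such that
adjacent vertices lie in comparable nodes, and each bag is exactly the set of universal
vertices of the subgraph induced by the union of the bags in the subtree below it. -/
structure UCD {V : Type u} (G : SimpleGraph V) : Type (u + 1) where
  ι : Type u
  [po : PartialOrder ι]
  [ot : OrderTop ι]
  [fin : Fintype ι]
  bag : ι → Set V
  bag_nonempty : ∀ t, (bag t).Nonempty
  bag_disjoint : ∀ s t, s ≠ t → Disjoint (bag s) (bag t)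
  bag_cover : ∀ v, ∃ t, v ∈ bag t
  up_chain : ∀ a b c : ι, a ≤ b → a ≤ c → b ≤ c ∨ c ≤ b
  adj_comparable : ∀ v w s t, G.Adj v w → v ∈ bag t → w ∈ bag s → s ≤ t ∨ t ≤ s
  bag_eq_universal : ∀ t, bag t =
    {v | (∃ s ≤ t, v ∈ bag s) ∧ ∀ w, (∃ s ≤ t, w ∈ bag s) → w ≠ v → G.Adj v w}

attribute [instance] UCD.po UCD.ot UCD.fin

namespace UCD

variable {V : Type u} {G : SimpleGraph V} (U : UCD G)

/-- `D_t`: the union of the bags in the subtree rooted at `t`. -/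
def subtreeSet (t : U.ι) : Set V := {v | ∃ s, s ≤ t ∧ v ∈ U.bag s}

/-- `Q_t`: the union of the bags on the path from `t` to the root. -/
def tailSet (t : U.ι) : Set V := {v | ∃ s, t ≤ s ∧ v ∈ U.bag s}

/-- `t` is a leaf of the decomposition tree. -/
def IsLeaf (t : U.ι) : Prop := ∀ s : U.ι, s ≤ t → s = t

end UCD

/-- `G + S`: the graph obtained from `G` by adding the pairs in `S` as edges. -/
def completes {V : Type u} (G : SimpleGraph V) (S : Set (Sym2 V)) : SimpleGraph V :=
  G ⊔ SimpleGraph.fromEdgeSet S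

/-- `S` is a set of non-edges of `G` (unordered pairs of distinct vertices, none an edge). -/
def IsCompletionSet {V : Type u} (G : SimpleGraph V) (S : Set (Sym2 V)) : Prop :=
  (∀ e ∈ S, ¬ e.IsDiag) ∧ Disjoint S G.edgeSet

/-- `S` is a minimal trivially perfect completion of `G`. -/
def IsMinTPCompletion {V : Type u} (G : SimpleGraph V) (S : Set (Sym2 V)) : Prop :=
  IsCompletionSet G S ∧ TriviallyPerfect (completes G S) ∧
    ∀ S' ⊂ S, ¬ TriviallyPerfect (completes G S')

/-- A vital potential maximal clique of `(G, k)`. -/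
def VitalPMC {V : Type u} (G : SimpleGraph V) (k : ℕ) (Ω : Set V) : Prop :=
  ∃ S, IsMinTPCompletion G S ∧ S.ncard ≤ k ∧ Maximal (completes G S).IsClique Ω

/-- The open neighborhood `N_G(U)` of a set `U`: vertices outside `U` with a neighbor in `U`. -/
def extNbhd {V : Type u} (G : SimpleGraph V) (W : Set V) : Set V :=
  {v | v ∉ W ∧ ∃ u ∈ W, G.Adj v u}

/-!
Suppose `v ∈ B` had no `G`-neighbour in a component `A` of `H[D] - B`. Then all edges from `v`
to `A` belong to `S`; we show that deleting them leaves a trivially perfect graph, contradicting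
minimality. The vertices of the root path `Q` of the block are adjacent to everything in `D ∪ Q`,
the neighbourhood of `A` lies in `A ∪ Q` and that of `v` in `D ∪ Q`. So an induced `C₄` or `P₄`
that uses a deleted edge would contain `v`, a vertex of `A` and, on a path between them, a vertex
`u ∈ Q \ {v}` next to `A`; a non-neighbour of `u` in the `C₄`/`P₄` lies outside `D ∪ Q`, yet it
must be adjacent to `v`, to the vertex of `A` or to `u`, which is impossible.
-/

namespace UCD

variable {V : Type u} {G : SimpleGraph V} (U : UCD G) {t : U.ι}

lemma adj_of_mem_bag_of_le {s s' : U.ι} {u y : V} (hu : u ∈ U.bag s) (hs : s' ≤ s)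
    (hy : y ∈ U.bag s') (hne : y ≠ u) : G.Adj u y :=
  ((Set.ext_iff.mp (U.bag_eq_universal s) u).mp hu).2 y ⟨s', hs, hy⟩ hne

lemma adj_of_mem_tailSet {u y : V} (hu : u ∈ U.tailSet t)
    (hy : y ∈ U.subtreeSet t ∪ U.tailSet t) (hne : y ≠ u) : G.Adj u y := by
  obtain ⟨s, hts, hus⟩ := hu
  rcases hy with ⟨s', hs't, hys'⟩ | ⟨s', hts', hys'⟩
  · exact U.adj_of_mem_bag_of_le hus (hs't.trans hts) hys' hne
  · rcases U.up_chain t s s' hts hts' with h | h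
    · exact (U.adj_of_mem_bag_of_le hys' h hus hne.symm).symm
    · exact U.adj_of_mem_bag_of_le hus h hys' hne

lemma mem_subtreeSet_or_tailSet_of_adj {a b : V} (ha : a ∈ U.subtreeSet t) (hab : G.Adj a b) :
    b ∈ U.subtreeSet t ∪ U.tailSet t := by
  obtain ⟨s', hs't, has'⟩ := ha
  obtain ⟨s, hbs⟩ := U.bag_cover b
  rcases U.adj_comparable a b s s' hab has' hbs with h | h
  · exact Or.inl ⟨s, h.trans hs't, hbs⟩
  · rcases U.up_chain s' s t h hs't with h' | h'
    · exact Or.inl ⟨s, h', hbs⟩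
    · exact Or.inr ⟨s, h', hbs⟩

lemma mem_bag_of_mem_subtreeSet_of_mem_tailSet {y : V} (hD : y ∈ U.subtreeSet t)
    (hQ : y ∈ U.tailSet t) : y ∈ U.bag t := by
  obtain ⟨s, hst, hys⟩ := hD
  obtain ⟨s', hts', hys'⟩ := hQ
  obtain rfl : s = s' := by_contra fun hne => (U.bag_disjoint s s' hne).ne_of_mem hys hys' rfl
  rwa [le_antisymm hst hts'] at hys

lemma bag_subset_tailSet : U.bag t ⊆ U.tailSet t := fun _ hv => ⟨t, le_rfl, hv⟩

lemma bag_subset_subtreeSet : U.bag t ⊆ U.subtreeSet t := fun _ hv => ⟨t, le_rfl, hv⟩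

end UCD

lemma SimpleGraph.ConnectedComponent.mem_image_val_supp_of_adj {V : Type u}
    {G : SimpleGraph V} {X : Set V} (c : (G.induce X).ConnectedComponent) {a b : V}
    (ha : a ∈ Subtype.val '' c.supp) (hb : b ∈ X) (hab : G.Adj a b) :
    b ∈ Subtype.val '' c.supp := by
  obtain ⟨a, ha, rfl⟩ := ha
  exact ⟨⟨b, hb⟩, c.mem_supp_of_adj_mem_supp ha hab, rfl⟩

lemma SimpleGraph.Preconnected.adj_of_ne_of_fin_four {Γ : SimpleGraph (Fin 4)}
    (hΓ : Γ.Preconnected) {a b c d : Fin 4} (hab : a ≠ b) (hac : a ≠ c) (had : a ≠ d)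
    (hbc : b ≠ c) (hbd : b ≠ d) (hcd : c ≠ d) : Γ.Adj d a ∨ Γ.Adj d b ∨ Γ.Adj d c := by
  obtain ⟨p⟩ := hΓ d a
  cases p with
  | nil => exact absurd rfl had
  | @cons _ z _ hdz _ =>
    have hz : z = a ∨ z = b ∨ z = c := by have := hdz.ne; omega
    rcases hz with rfl | rfl | rfl <;> simp [hdz]

section StarDeletion

variable {V : Type u}

def starEdges (v : V) (A : Set V) : Set (Sym2 V) := (fun w => s(v, w)) '' A

lemma mk_mem_starEdges_iff {v a b : V} {A : Set V} :
    s(a, b) ∈ starEdges v A ↔ (a = v ∧ b ∈ A) ∨ (b = v ∧ a ∈ A) := by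
  simp only [starEdges, Set.mem_image, Sym2.eq_iff]
  constructor
  · rintro ⟨w, hw, ⟨rfl, rfl⟩ | ⟨rfl, rfl⟩⟩
    exacts [Or.inl ⟨rfl, hw⟩, Or.inr ⟨rfl, hw⟩]
  · rintro (⟨rfl, hb⟩ | ⟨rfl, ha⟩)
    exacts [⟨b, hb, Or.inl ⟨rfl, rfl⟩⟩, ⟨a, ha, Or.inr ⟨rfl, rfl⟩⟩]

lemma nonempty_embedding_of_deleteEdges {W : Type*} {Γ : SimpleGraph W} {H : SimpleGraph V}
    {F : Set (Sym2 V)} (f : Γ ↪g H.deleteEdges F) (hf : ∀ a b, s(f a, f b) ∉ F) :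
    Nonempty (Γ ↪g H) :=
  ⟨⟨f.toEmbedding, fun {a b} => by
    rw [← f.map_adj_iff, deleteEdges_adj, and_iff_left (hf a b)]; rfl⟩⟩

/-- `T` plays the role of the root path of a block, `M` of the block together with its root path
and `A` of a component of the block below its bag. -/
lemma false_of_embedding_through {Γ : SimpleGraph (Fin 4)} (hΓ : Γ.Preconnected)
    (hdom : ∀ p, ∃ q, q ≠ p ∧ ¬ Γ.Adj p q) {H : SimpleGraph V} {M T A : Set V} {v : V}
    (hTM : T ⊆ M) (hAM : A ⊆ M) (hvT : v ∈ T) (hvA : v ∉ A)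
    (hT : ∀ u ∈ T, u ≠ v → ∀ y ∈ M, y ≠ u → H.Adj u y)
    (hA : ∀ a ∈ A, ∀ b, H.Adj a b → b ∈ A ∪ (T \ {v}))
    (hv : ∀ b, H.Adj v b → b ∈ M)
    (f : Γ ↪g H) {i j : Fin 4} (hi : f i = v) (hj : f j ∈ A) : False := by
  obtain ⟨p⟩ := hΓ i j
  obtain ⟨d, -, hda, hdb⟩ :=
    p.exists_boundary_dart {k | f k ∉ A} (by simpa [hi]) (by simpa using hj)
  obtain ⟨hua, huT, huv⟩ : f d.fst ∉ A ∧ f d.fst ∈ T ∧ f d.fst ≠ v := by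
    simp only [Set.mem_ofPred_eq, not_not] at hda hdb
    have := hA _ hdb _ (f.map_adj_iff.mpr d.adj).symm
    simp_all
  obtain ⟨y, hyu, hny⟩ := hdom d.fst
  have hyM : f y ∉ M := fun hM =>
    hny (f.map_adj_iff.mp (hT _ huT huv _ hM (f.injective.ne hyu)))
  have hij : i ≠ j := by rintro rfl; exact hvA (hi ▸ hj)
  have hiu : i ≠ d.fst := by rintro rfl; exact huv hi
  have hiy : i ≠ y := by rintro rfl; exact hyM (hi ▸ hTM hvT)
  have hju : j ≠ d.fst := by rintro rfl; exact hua hj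
  have hjy : j ≠ y := by rintro rfl; exact hyM (hAM hj)
  rcases hΓ.adj_of_ne_of_fin_four hij hiu hiy hju hjy hyu.symm with h | h | h
  · exact hyM (hv _ (hi ▸ (f.map_adj_iff.mpr h).symm))
  · rcases hA _ hj _ (f.map_adj_iff.mpr h).symm with hA' | hT'
    exacts [hyM (hAM hA'), hyM (hTM hT'.1)]
  · exact hny h.symm

lemma isEmpty_embedding_deleteEdges_starEdges {Γ : SimpleGraph (Fin 4)} (hΓ : Γ.Preconnected)
    (hdom : ∀ p, ∃ q, q ≠ p ∧ ¬ Γ.Adj p q) {H : SimpleGraph V} (hH : IsEmpty (Γ ↪g H))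
    {M T A : Set V} {v : V} (hTM : T ⊆ M) (hAM : A ⊆ M) (hvT : v ∈ T) (hAT : Disjoint A T)
    (hT : ∀ u ∈ T, ∀ y ∈ M, y ≠ u → H.Adj u y)
    (hA : ∀ a ∈ A, ∀ b, H.Adj a b → b ∈ A ∪ T)
    (hv : ∀ b, H.Adj v b → b ∈ M) :
    IsEmpty (Γ ↪g H.deleteEdges (starEdges v A)) := by
  refine ⟨fun f => ?_⟩
  have hvA : v ∉ A := fun h => hAT.ne_of_mem h hvT rfl
  by_cases hlift : ∀ a b, s(f a, f b) ∉ starEdges v A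
  · exact hH.false (nonempty_embedding_of_deleteEdges f hlift).some
  simp only [not_forall, not_not] at hlift
  obtain ⟨a, b, hab⟩ := hlift
  have key : ∀ i j, f i = v → f j ∈ A → False := fun i j hi hj => by
    refine false_of_embedding_through hΓ hdom hTM hAM hvT hvA (fun u hu huv y hy hyu => ?_)
      (fun a ha b hab => ?_) (fun b hb => hv b (deleteEdges_le _ hb)) f hi hj
    · refine (deleteEdges_adj ..).mpr ⟨hT u hu y hy hyu, ?_⟩
      rw [mk_mem_starEdges_iff]
      rintro (⟨rfl, -⟩ | ⟨-, huA⟩)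
      exacts [huv rfl, hAT.ne_of_mem huA hu rfl]
    · rw [deleteEdges_adj, mk_mem_starEdges_iff] at hab
      rcases hA a ha b hab.1 with hbA | hbT
      · exact Or.inl hbA
      · exact Or.inr ⟨hbT, fun hbv => hab.2 (Or.inr ⟨hbv, ha⟩)⟩
  rw [mk_mem_starEdges_iff] at hab
  rcases hab with ⟨ha, hb⟩ | ⟨hb, ha⟩
  exacts [key a b ha hb, key b a hb ha]

lemma cycleGraph_four_not_dominating : ∀ p : Fin 4, ∃ q, q ≠ p ∧ ¬ (cycleGraph 4).Adj p q := by
  decide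

lemma pathGraph_four_not_dominating : ∀ p : Fin 4, ∃ q, q ≠ p ∧ ¬ (pathGraph 4).Adj p q := by
  simp only [pathGraph_adj]; decide

theorem TriviallyPerfect.deleteEdges_starEdges {H : SimpleGraph V} (hH : TriviallyPerfect H)
    {M T A : Set V} {v : V} (hTM : T ⊆ M) (hAM : A ⊆ M) (hvT : v ∈ T) (hAT : Disjoint A T)
    (hT : ∀ u ∈ T, ∀ y ∈ M, y ≠ u → H.Adj u y)
    (hA : ∀ a ∈ A, ∀ b, H.Adj a b → b ∈ A ∪ T)
    (hv : ∀ b, H.Adj v b → b ∈ M) :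
    TriviallyPerfect (H.deleteEdges (starEdges v A)) :=
  ⟨isEmpty_embedding_deleteEdges_starEdges cycleGraph_preconnected
      cycleGraph_four_not_dominating hH.1 hTM hAM hvT hAT hT hA hv,
    isEmpty_embedding_deleteEdges_starEdges (pathGraph_preconnected 4)
      pathGraph_four_not_dominating hH.2 hTM hAM hvT hAT hT hA hv⟩

end StarDeletion

lemma completes_diff_eq_deleteEdges {V : Type u} {G : SimpleGraph V} {S F : Set (Sym2 V)}
    (hSG : Disjoint S G.edgeSet) (hFS : F ⊆ S) :
    completes G (S \ F) = (completes G S).deleteEdges F := by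
  ext a b
  simp only [completes, deleteEdges_adj, sup_adj, fromEdgeSet_adj, Set.mem_sdiff]
  constructor
  · rintro (hG | ⟨⟨hS, hF⟩, hne⟩)
    · exact ⟨Or.inl hG, fun hF => hSG.ne_of_mem (hFS hF) hG rfl⟩
    · exact ⟨Or.inr ⟨hS, hne⟩, hF⟩
  · rintro ⟨hG | ⟨hS, hne⟩, hF⟩
    exacts [Or.inl hG, Or.inr ⟨⟨hS, hF⟩, hne⟩]

theorem IsMinTPCompletion.exists_adj_of_mem_bag {V : Type u} {G : SimpleGraph V}
    {S : Set (Sym2 V)} (hS : IsMinTPCompletion G S) (U : UCD (completes G S)) {t : U.ι} {v : V}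
    (hv : v ∈ U.bag t)
    (c : ((completes G S).induce (U.subtreeSet t \ U.bag t)).ConnectedComponent) :
    ∃ w ∈ Subtype.val '' c.supp, G.Adj v w := by
  obtain ⟨⟨-, hSG⟩, hTP, hmin⟩ := hS
  by_contra! hno
  set A := Subtype.val '' c.supp
  have hAD : A ⊆ U.subtreeSet t \ U.bag t := by rintro _ ⟨w, -, rfl⟩; exact w.2
  have hAQ : Disjoint A (U.tailSet t) := Set.disjoint_left.mpr fun w hw hwQ =>
    (hAD hw).2 (U.mem_bag_of_mem_subtreeSet_of_mem_tailSet (hAD hw).1 hwQ)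
  have hvQ := U.bag_subset_tailSet hv
  have hFS : starEdges v A ⊆ S := by
    rintro _ ⟨w, hw, rfl⟩
    have hvw := U.adj_of_mem_tailSet hvQ (Or.inl (hAD hw).1) fun h => (hAD hw).2 (h ▸ hv)
    exact (hvw.resolve_left (hno w hw)).1
  obtain ⟨w₀, hw₀⟩ := c.nonempty_supp
  have hvw₀ : s(v, w₀.val) ∈ starEdges v A := ⟨_, ⟨w₀, hw₀, rfl⟩, rfl⟩
  have hss : S \ starEdges v A ⊂ S := Set.sdiff_ssubset_left_iff.mpr ⟨_, hFS hvw₀, hvw₀⟩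
  refine hmin _ hss ?_
  rw [completes_diff_eq_deleteEdges hSG hFS]
  refine hTP.deleteEdges_starEdges Set.subset_union_right
    (fun w hw => Or.inl (hAD hw).1) hvQ hAQ (fun u hu y hy hyu => U.adj_of_mem_tailSet hu hy hyu)
    (fun a ha b hab => ?_) fun b => U.mem_subtreeSet_or_tailSet_of_adj (U.bag_subset_subtreeSet hv)
  rcases U.mem_subtreeSet_or_tailSet_of_adj (hAD ha).1 hab with hbD | hbQ
  · by_cases hbB : b ∈ U.bag t
    · exact Or.inr (U.bag_subset_tailSet hbB)
    · exact Or.inl (c.mem_image_val_supp_of_adj ha ⟨hbD, hbB⟩ hab)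
  · exact Or.inr hbQ

theorem minTPCompletion_block_neighbors_in_components_general {V : Type u}
    (G : SimpleGraph V) (S : Set (Sym2 V)) (hS : IsMinTPCompletion G S)
    (U : UCD (completes G S)) (t : U.ι)
    (hl : ∃ c₁ c₂ : ((completes G S).induce (U.subtreeSet t \ U.bag t)).ConnectedComponent,
      c₁ ≠ c₂) :
    (∀ v ∈ U.bag t,
      ∀ c : ((completes G S).induce (U.subtreeSet t \ U.bag t)).ConnectedComponent,
        ∃ w ∈ Subtype.val '' c.supp, G.Adj v w) ∧
    (∀ c : ((completes G S).induce (U.subtreeSet t \ U.bag t)).ConnectedComponent,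
      U.bag t ⊆ extNbhd G (U.subtreeSet t \ (U.bag t ∪ Subtype.val '' c.supp))) := by
  refine ⟨fun v hv c => hS.exists_adj_of_mem_bag U hv c, fun c v hv => ?_⟩
  obtain ⟨c', hc'⟩ := @exists_ne _ ⟨hl⟩ c
  obtain ⟨_, ⟨w, hw, rfl⟩, hvw⟩ := hS.exists_adj_of_mem_bag U hv c'
  refine ⟨fun h => h.2 (Or.inl hv), w, ⟨w.2.1, ?_⟩, hvw⟩
  rintro (hwB | ⟨w', hw', hw'w⟩)
  · exact w.2.2 hwB
  · exact (pairwise_disjoint_supp_connectedComponent _ hc').ne_of_mem hw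
      (Subtype.ext hw'w ▸ hw') rfl

/-- Let `H = G + S` be a minimal trivially perfect completion of a connected graph `G`, and
`(B, D)` a block of the universal clique decomposition of `H`.  If `H[D] - B` has more than
one connected component, then in `G` every vertex of `B` has a neighbor in each connected
component of `H[D] - B`; consequently `B ⊆ N_G(D \ (B ∪ Dᵢ))` for each component `Dᵢ`. -/
theorem minTPCompletion_block_neighbors_in_components {V : Type u} [Fintype V]
    (G : SimpleGraph V) (hG : G.Connected) (S : Set (Sym2 V)) (hS : IsMinTPCompletion G S)
    (U : UCD (completes G S)) (t : U.ι)
    (hl : ∃ c₁ c₂ : ((completes G S).induce (U.subtreeSet t \ U.bag t)).ConnectedComponent,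
      c₁ ≠ c₂) :
    (∀ v ∈ U.bag t,
      ∀ c : ((completes G S).induce (U.subtreeSet t \ U.bag t)).ConnectedComponent,
        ∃ w ∈ Subtype.val '' c.supp, G.Adj v w) ∧
    (∀ c : ((completes G S).induce (U.subtreeSet t \ U.bag t)).ConnectedComponent,
      U.bag t ⊆ extNbhd G (U.subtreeSet t \ (U.bag t ∪ Subtype.val '' c.supp))) :=
  minTPCompletion_block_neighbors_in_components_general G S hS U t hl
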